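/- arXiv:2412.00399 — 3 statements merged into one kernel-verified Lean document; each statement's English description precedes it below -/
import Mathlib

section
/- Fix an integer n ≥ 2. Let R_univ = ℂ[x_{ij} : 1 ≤ i ≤ n, 1 ≤ j ≤ n−1][a], let d_2 be the n × (n−1) matrix with entries x_{ij}, and let d_1 be the 1 × n row vector whose j-th entry is (−1)^{j+1} · a · det(d_2 with its j-th row deleted). Then the complex F^univ : 0 → R_univ^{n−1} → R_univ^n → R_univ with differentials d_2 and d_1 is acyclic, i.e., exact at R_univ^{n−1} and at R_univ^n. -/
/-!
STATEMENT 2: The universal Hilbert–Burch complex F^univ of format (1, n, n−1) is acyclic,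
i.e. exact at R_univ^{n-1} and at R_univ^n.
-/

open Matrix

/-- The map `Fin (n-1) → Fin n` skipping the row `j` (deletion of the `j`-th row). -/
def delRow {n : ℕ} (j : Fin n) (i : Fin (n - 1)) : Fin n :=
  if h : (i : ℕ) < (j : ℕ) then ⟨i, lt_trans h j.2⟩
  else ⟨(i : ℕ) + 1, by have := i.2; have := j.2; omega⟩

/-- The universal ring for the format `(1, n, n-1)`: a polynomial ring over `ℂ` in the
`n(n-1)` variables `x_{ij}` and one further variable `a`. -/
noncomputable abbrev HBUnivRing (n : ℕ) : Type :=
  MvPolynomial ((Fin n × Fin (n - 1)) ⊕ Unit) ℂ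

/-- The generic `n × (n-1)` matrix of variables. -/
noncomputable def HBd2 (n : ℕ) : Matrix (Fin n) (Fin (n - 1)) (HBUnivRing n) :=
  fun i j => MvPolynomial.X (Sum.inl (i, j))

/-- The row vector whose `j`-th entry is `(-1)^(j+1) · a ·` (the maximal minor of the
generic matrix obtained by deleting its `j`-th row). -/
noncomputable def HBd1 (n : ℕ) : Matrix (Fin 1) (Fin n) (HBUnivRing n) :=
  fun _ j => (-1 : HBUnivRing n) ^ ((j : ℕ) + 1) *
    MvPolynomial.X (Sum.inr ()) * ((HBd2 n).submatrix (delRow j) id).det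

/-!
Write `M` for the generic matrix and `Δ j` for its maximal minors. The minor `Δ j` involves no
variable of row `j`, and none involves `a`, so the `Δ j` have no common non-unit factor in the
factorial ring `ℂ[x, a]`; moreover `d₁ v = -a · det [v | M]`. If `det [v | M] = 0`, take a kernel
vector `(c₀, c)` of `[v | M]`: `c₀ ≠ 0` since `M` is injective (`Δ 0 ≠ 0`), Cramer's rule on the
rows other than `j` gives `c₀ ∣ Δ j · c k` for every `j`, hence `c₀ ∣ c k` and `v = M (-c / c₀)`.
-/

open MvPolynomial

theorem UniqueFactorizationMonoid.dvd_of_forall_dvd_mul {α ι : Type*} [CommMonoidWithZero α]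
    [UniqueFactorizationMonoid α] {d : ι → α} (hd : ∀ q, (∀ i, q ∣ d i) → IsUnit q) {a b : α}
    (ha : a ≠ 0) (h : ∀ i, a ∣ d i * b) : a ∣ b := by
  obtain ⟨a', b', g, hrel, rfl, rfl⟩ := exists_reduced_factors a ha b
  have hg : g ≠ 0 := left_ne_zero_of_mul ha
  have ha' : IsUnit a' := hd a' fun i ↦ hrel.dvd_of_dvd_mul_right <|
    (mul_dvd_mul_iff_left hg).mp (by simpa only [mul_left_comm] using h i)
  exact mul_dvd_mul_left g ha'.dvd

namespace MvPolynomial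

variable {σ : Type*}

theorem notMem_vars_of_dvd {R : Type*} [CommSemiring R] [NoZeroDivisors R]
    {p q : MvPolynomial σ R} (hqp : q ∣ p) (hp : p ≠ 0) {x : σ} (hx : x ∉ p.vars) : x ∉ q.vars := by
  obtain ⟨r, rfl⟩ := hqp
  rw [mem_vars_iff_degreeOf_ne_zero, not_not] at hx ⊢
  rw [degreeOf_mul_eq (left_ne_zero_of_mul hp) (right_ne_zero_of_mul hp)] at hx
  omega

theorem isUnit_of_forall_dvd_of_forall_exists_notMem_vars {K ι : Type*} [Field K] [Nonempty ι]
    {p : ι → MvPolynomial σ K} (hp : ∀ i, p i ≠ 0) (hvars : ∀ x, ∃ i, x ∉ (p i).vars)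
    {q : MvPolynomial σ K} (hq : ∀ i, q ∣ p i) : IsUnit q := by
  have hq0 : q ≠ 0 := by
    rintro rfl
    exact hp (Classical.arbitrary ι) (zero_dvd_iff.mp (hq _))
  have hC : q = C (q.coeff 0) := vars_eq_empty_iff_eq_C.mp <| Finset.eq_empty_of_forall_notMem
    fun x ↦ let ⟨i, hi⟩ := hvars x; notMem_vars_of_dvd (hq i) (hp i) hi
  refine isUnit_iff_eq_C_of_isReduced.mpr ⟨q.coeff 0, isUnit_iff_ne_zero.mpr fun h ↦ hq0 ?_, hC⟩
  rw [hC, h, C_0]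

end MvPolynomial

namespace Matrix

variable {R : Type*} [CommRing R] {m : ℕ}

def maximalMinor (M : Matrix (Fin (m + 1)) (Fin m) R) (j : Fin (m + 1)) : R :=
  (M.submatrix j.succAbove id).det

def consCol (v : Fin (m + 1) → R) (M : Matrix (Fin (m + 1)) (Fin m) R) :
    Matrix (Fin (m + 1)) (Fin (m + 1)) R :=
  of fun i ↦ Fin.cons (v i) (M i)

theorem det_consCol (v : Fin (m + 1) → R) (M : Matrix (Fin (m + 1)) (Fin m) R) :
    (consCol v M).det = ∑ j : Fin (m + 1), (-1) ^ (j : ℕ) * v j * M.maximalMinor j := by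
  rw [det_succ_column_zero]
  rfl

theorem consCol_mulVec_cons (v : Fin (m + 1) → R) (M : Matrix (Fin (m + 1)) (Fin m) R)
    (c₀ : R) (c : Fin m → R) : consCol v M *ᵥ Fin.cons c₀ c = c₀ • v + M *ᵥ c :=
  mulVec_cons _ c₀ c

theorem submatrix_id_mulVec {α l n o : Type*} [NonUnitalNonAssocSemiring α] [Fintype n]
    (M : Matrix l n α) (e : o → l) (x : n → α) : M.submatrix e id *ᵥ x = (M *ᵥ x) ∘ e :=
  rfl

theorem dvd_det_mul_of_mulVec_eq_smul {n : Type*} [Fintype n] [DecidableEq n] {A : Matrix n n R}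
    {x y : n → R} {a : R} (h : A *ᵥ x = a • y) (k : n) : a ∣ A.det * x k := by
  have h' := congrArg (adjugate A *ᵥ ·) h
  simp only [mulVec_mulVec, adjugate_mul, smul_mulVec, one_mulVec, mulVec_smul] at h'
  exact ⟨_, congrFun h' k⟩

variable [IsDomain R]

theorem mulVec_injective_of_maximalMinor_ne_zero {M : Matrix (Fin (m + 1)) (Fin m) R}
    {j : Fin (m + 1)} (hj : M.maximalMinor j ≠ 0) : Function.Injective M.mulVec := by
  intro x y hxy
  rw [← sub_eq_zero]
  refine eq_zero_of_mulVec_eq_zero hj ?_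
  rw [submatrix_id_mulVec, mulVec_sub, hxy, sub_self]
  rfl

theorem det_consCol_mulVec (M : Matrix (Fin (m + 1)) (Fin m) R) (w : Fin m → R) :
    (consCol (M *ᵥ w) M).det = 0 :=
  exists_mulVec_eq_zero_iff.mp ⟨Fin.cons (-1) w, fun h ↦ by simpa using congrFun h 0,
    by rw [consCol_mulVec_cons, neg_one_smul, neg_add_cancel]⟩

variable [UniqueFactorizationMonoid R]

theorem exists_mulVec_eq_of_det_consCol_eq_zero {M : Matrix (Fin (m + 1)) (Fin m) R}
    (hM : ∀ q, (∀ j, q ∣ M.maximalMinor j) → IsUnit q) {v : Fin (m + 1) → R}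
    (hv : (consCol v M).det = 0) : ∃ w, M *ᵥ w = v := by
  obtain ⟨j₀, hj₀⟩ : ∃ j, M.maximalMinor j ≠ 0 := by
    by_contra! h
    exact not_isUnit_zero (hM 0 fun j ↦ (h j).symm ▸ dvd_refl 0)
  have hinj := mulVec_injective_of_maximalMinor_ne_zero hj₀
  obtain ⟨c, hc, hcv⟩ := exists_mulVec_eq_zero_iff.mpr hv
  rw [← Fin.cons_self_tail c, consCol_mulVec_cons, add_eq_zero_iff_neg_eq] at hcv
  have hc₀ : c 0 ≠ 0 := by
    intro h₀
    have htail : Fin.tail c = 0 := hinj <| by rw [← hcv, h₀, zero_smul, neg_zero, mulVec_zero]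
    rw [← Fin.cons_self_tail c, h₀, htail] at hc
    exact hc cons_zero_zero
  have hdvd : ∀ k, c 0 ∣ Fin.tail c k := fun k ↦
    UniqueFactorizationMonoid.dvd_of_forall_dvd_mul hM hc₀ fun j ↦
      dvd_det_mul_of_mulVec_eq_smul (y := -(v ∘ j.succAbove))
        (by rw [submatrix_id_mulVec, ← hcv]; ext; simp) k
  choose w hw using hdvd
  have htail : Fin.tail c = c 0 • w := funext hw
  refine ⟨-w, smul_right_injective _ hc₀ ?_⟩
  change c 0 • M *ᵥ -w = c 0 • v
  rw [mulVec_neg, smul_neg, ← mulVec_smul, ← htail, ← hcv, neg_neg]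

theorem exists_mulVec_eq_iff_det_consCol_eq_zero {M : Matrix (Fin (m + 1)) (Fin m) R}
    (hM : ∀ q, (∀ j, q ∣ M.maximalMinor j) → IsUnit q) (v : Fin (m + 1) → R) :
    (∃ w, M *ᵥ w = v) ↔ (consCol v M).det = 0 :=
  ⟨fun ⟨w, hw⟩ ↦ hw ▸ det_consCol_mulVec M w, exists_mulVec_eq_of_det_consCol_eq_zero hM⟩

end Matrix

section Universal

variable (m : ℕ)

theorem delRow_eq_succAbove (j : Fin (m + 1)) : delRow j = j.succAbove := by
  funext i
  simp only [delRow, Fin.succAbove, Fin.lt_def, Fin.val_castSucc]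
  split_ifs <;> rfl

theorem maximalMinor_HBd2 (j : Fin (m + 1)) :
    (HBd2 (m + 1)).maximalMinor j =
      rename (fun p : Fin m × Fin m ↦ Sum.inl (j.succAbove p.1, p.2))
        (mvPolynomialX (Fin m) (Fin m) ℂ).det := by
  rw [maximalMinor, ← AlgHom.coe_toRingHom, RingHom.map_det]
  congr 1
  ext i k
  simp [HBd2, mvPolynomialX]

theorem maximalMinor_HBd2_ne_zero (j : Fin (m + 1)) : (HBd2 (m + 1)).maximalMinor j ≠ 0 := by
  rw [maximalMinor_HBd2, Ne, map_eq_zero_iff _ (rename_injective _ ?_)]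
  · exact det_mvPolynomialX_ne_zero _ _
  · rintro ⟨i, k⟩ ⟨i', k'⟩ h
    simpa using h

theorem isUnit_of_forall_dvd_maximalMinor_HBd2 :
    ∀ q, (∀ j, q ∣ (HBd2 (m + 1)).maximalMinor j) → IsUnit q := by
  refine fun q ↦ isUnit_of_forall_dvd_of_forall_exists_notMem_vars
    (maximalMinor_HBd2_ne_zero m) fun x ↦ ?_
  have hvars : ∀ j, x ∈ ((HBd2 (m + 1)).maximalMinor j).vars →
      ∃ p : Fin m × Fin m, Sum.inl (j.succAbove p.1, p.2) = x := fun j hx ↦ by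
    rw [maximalMinor_HBd2] at hx
    obtain ⟨p, -, hp⟩ := mem_vars_rename _ _ hx
    exact ⟨p, hp⟩
  rcases x with ⟨i, k⟩ | ⟨⟩
  · refine ⟨i, fun hx ↦ ?_⟩
    obtain ⟨p, hp⟩ := hvars i hx
    exact Fin.succAbove_ne i p.1 (congrArg Prod.fst (Sum.inl_injective hp))
  · refine ⟨0, fun hx ↦ ?_⟩
    obtain ⟨p, hp⟩ := hvars 0 hx
    exact Sum.inl_ne_inr hp

theorem HBd1_mulVec_eq_zero_iff (v : Fin (m + 1) → HBUnivRing (m + 1)) :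
    HBd1 (m + 1) *ᵥ v = 0 ↔ (consCol v (HBd2 (m + 1))).det = 0 := by
  have h : ∀ i, (HBd1 (m + 1) *ᵥ v) i = -(X (Sum.inr ()) * (consCol v (HBd2 (m + 1))).det) := by
    intro i
    simp only [mulVec, dotProduct, HBd1, delRow_eq_succAbove, det_consCol, maximalMinor,
      Finset.mul_sum, ← Finset.sum_neg_distrib]
    exact Finset.sum_congr rfl fun j _ ↦ by ring
  simp [funext_iff, h, X_ne_zero]

end Universal

theorem hilbert_burch_universal_complex_acyclic_general (n : ℕ) :
    LinearMap.ker (HBd2 n).mulVecLin = ⊥ ∧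
    LinearMap.ker (HBd1 n).mulVecLin = LinearMap.range (HBd2 n).mulVecLin := by
  rcases n with _ | m
  · constructor <;> exact Subsingleton.elim (α := Submodule _ (Fin 0 → _)) _ _
  refine ⟨LinearMap.ker_eq_bot.mpr <|
    mulVec_injective_of_maximalMinor_ne_zero (maximalMinor_HBd2_ne_zero m 0), ?_⟩
  ext v
  rw [LinearMap.mem_ker, LinearMap.mem_range, mulVecLin_apply, HBd1_mulVec_eq_zero_iff,
    ← exists_mulVec_eq_iff_det_consCol_eq_zero (isUnit_of_forall_dvd_maximalMinor_HBd2 m)]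
  rfl

theorem hilbert_burch_universal_complex_acyclic (n : ℕ) (hn : 2 ≤ n) :
    LinearMap.ker (HBd2 n).mulVecLin = ⊥ ∧
    LinearMap.ker (HBd1 n).mulVecLin = LinearMap.range (HBd2 n).mulVecLin :=
  hilbert_burch_universal_complex_acyclic_general n
end

section
/- Let R be a commutative Noetherian ring and let F : 0 → F_n → … → F_1 → F_0 be a complex of finite free R-modules with differentials d_k that is acyclic in grade 1, with Buchsbaum–Eisenbud multipliers a_1, …, a_n (relative to fixed isomorphisms φ_i : Λ^{f_i} F_i ≅ R, where f_i = rank F_i). If moreover grade I(d_1) ≥ 2 and rank d_1 = rank F_0, then the element of R corresponding to a_1 ∈ Λ^{rank F_0} F_0 under the isomorphism φ_0 : Λ^{f_0} F_0 ≅ R is a unit of R. -/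
/-!
Applying the defining identity of the multipliers to `e_{c₁} ∧ ⋯ ∧ e_{cₘ}`, where
`m = rank F₀ = rank d₁`, shows that every maximal minor of `d₁` is a multiple of `φ₀(a₁)`,
i.e. `I(d₁) ⊆ (φ₀(a₁))`. An ideal of grade at least 2 lies in no proper principal ideal `(u)`:
if a regular sequence `r = r'u, s = s'u` lies in `(u)`, then `s r' = r s'` gives `r' = r t`,
and `r = r u t` forces `u t = 1`.
-/

/-- The supremum (in `ℕ∞`) of the lengths of `R`-regular sequences contained in `I`. -/
noncomputable def regSeqSup {R : Type*} [CommRing R] (I : Ideal R) : ℕ∞ :=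
  sSup {N : ℕ∞ | ∃ rs : List R, (∀ r ∈ rs, r ∈ I) ∧
    RingTheory.Sequence.IsRegular R rs ∧ N = rs.length}

open Classical in
/-- The grade of an ideal: the length of a maximal regular sequence contained in it,
with the convention `grade R = ⊤` for the unit ideal. -/
noncomputable def idealGrade {R : Type*} [CommRing R] (I : Ideal R) : ℕ∞ :=
  if I = ⊤ then ⊤ else regSeqSup I

/-- The ideal of `r × r` minors of a matrix (so `minorsIdeal 0 M = R`). -/
def minorsIdeal {R : Type*} [CommRing R] {a b : ℕ} (r : ℕ)
    (M : Matrix (Fin a) (Fin b) R) : Ideal R :=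
  Ideal.span {x : R | ∃ (rows : Fin r → Fin a) (cols : Fin r → Fin b),
    x = (M.submatrix rows cols).det}

/-- The rank of a matrix over a commutative ring: the largest `r` such that the ideal of
`r × r` minors is nonzero. -/
noncomputable def matrixRank {R : Type*} [CommRing R] {a b : ℕ}
    (M : Matrix (Fin a) (Fin b) R) : ℕ :=
  sSup {r : ℕ | minorsIdeal r M ≠ ⊥}

/-- A complex `0 → R^{f n} → ⋯ → R^{f 1} → R^{f 0}` of finite free `R`-modules, encoded by
its matrices of differentials; `d k` is the matrix of the differential `F_{k+1} → F_k`.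
(A format of length `n` is encoded by a function `f : ℕ → ℕ` vanishing above `n`;
in particular `d n` is the zero matrix `d_{n+1} = 0`.) -/
structure MatrixComplex (R : Type*) [CommRing R] (f : ℕ → ℕ) where
  d : ∀ k : ℕ, Matrix (Fin (f k)) (Fin (f (k + 1))) R
  comp_eq_zero : ∀ k : ℕ, d k * d (k + 1) = 0

/-- The complex is acyclic in grade `c`: its localization at every prime of grade at most
`c` is exact at all positive positions. -/
def MatrixComplex.IsAcyclicInGrade {R : Type*} [CommRing R] {f : ℕ → ℕ}
    (n c : ℕ) (C : MatrixComplex R f) : Prop :=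
  ∀ (p : Ideal R) (_ : p.IsPrime), idealGrade p ≤ (c : ℕ∞) →
    ∀ k : ℕ, k < n →
      LinearMap.ker ((C.d k).map (algebraMap R (Localization.AtPrime p))).mulVecLin =
        LinearMap.range ((C.d (k + 1)).map (algebraMap R (Localization.AtPrime p))).mulVecLin

namespace ExteriorAlgebra

variable {R M : Type*} [CommRing R] [AddCommGroup M] [Module R M]

theorem ιMulti_eq_det_smul {m : ℕ} (b : Module.Basis (Fin m) R M) (v : Fin m → M) :
    ιMulti R m v = b.det v • ιMulti R m ⇑b := by
  have h : ιMulti R m (M := M) =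
      (LinearMap.toSpanSingleton R _ (ιMulti R m ⇑b)).compAlternatingMap b.det := by
    refine b.ext_alternating fun w hw => ?_
    let σ : Equiv.Perm (Fin m) := Equiv.ofBijective w (Finite.injective_iff_bijective.1 hw)
    have hσ : (fun i => b (w i)) = ⇑b ∘ ⇑σ := rfl
    rw [hσ, AlternatingMap.map_perm, LinearMap.compAlternatingMap_apply, AlternatingMap.map_perm,
      Module.Basis.det_self, LinearMap.toSpanSingleton_apply, Units.smul_def, Units.smul_def,
      smul_assoc, one_smul]
  conv_lhs => rw [h]
  rfl

theorem exists_eq_smul_ιMulti_basis {m : ℕ} (b : Module.Basis (Fin m) R M)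
    {z : ExteriorAlgebra R M} (hz : z ∈ ⋀[R]^m M) : ∃ r : R, z = r • ιMulti R m ⇑b := by
  rw [← ιMulti_span_fixedDegree] at hz
  induction hz using Submodule.span_induction with
  | mem x hx =>
    obtain ⟨v, rfl⟩ := hx
    exact ⟨_, ιMulti_eq_det_smul b v⟩
  | zero => exact ⟨0, (zero_smul R _).symm⟩
  | add x y _ _ hx hy =>
    obtain ⟨r, rfl⟩ := hx
    obtain ⟨s, rfl⟩ := hy
    exact ⟨r + s, (add_smul r s _).symm⟩
  | smul c x _ hx =>
    obtain ⟨r, rfl⟩ := hx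
    exact ⟨c * r, (mul_smul c r _).symm⟩

theorem isUnit_apply_ιMulti_basis {m : ℕ} (b : Module.Basis (Fin m) R M)
    (e : ⋀[R]^m M ≃ₗ[R] R) : IsUnit (e ⟨ιMulti R m ⇑b, ιMulti_range R m ⟨⇑b, rfl⟩⟩) := by
  obtain ⟨z, hz⟩ := e.surjective 1
  obtain ⟨r, hr⟩ := exists_eq_smul_ιMulti_basis b z.2
  have hz' : z = r • ⟨ιMulti R m ⇑b, ιMulti_range R m ⟨⇑b, rfl⟩⟩ := Subtype.ext hr
  rw [hz', map_smul, smul_eq_mul] at hz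
  exact IsUnit.of_mul_eq_one_right _ hz

end ExteriorAlgebra

namespace Matrix

variable {R : Type*} [CommRing R]

open ExteriorAlgebra

theorem map_mulVecLin_ιMulti_single {m k : ℕ} (d : Matrix (Fin m) (Fin k) R)
    (cols : Fin m → Fin k) :
    ExteriorAlgebra.map d.mulVecLin (ιMulti R m fun i => Pi.single (cols i) 1) =
      (d.submatrix id cols).det • ιMulti R m ⇑(Pi.basisFun R (Fin m)) := by
  rw [map_apply_ιMulti, ιMulti_eq_det_smul (Pi.basisFun R (Fin m)), Pi.basisFun_det,
    ← det_transpose]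
  congr 2
  ext i j
  simp [mulVec_single]

theorem minorsIdeal_le_of_det_submatrix_mem {m k : ℕ} (d : Matrix (Fin m) (Fin k) R)
    {I : Ideal R} (h : ∀ cols : Fin m → Fin k, (d.submatrix id cols).det ∈ I) :
    minorsIdeal m d ≤ I := by
  rw [minorsIdeal, Ideal.span_le]
  rintro x ⟨rows, cols, rfl⟩
  by_cases hinj : Function.Injective rows
  · let σ := Equiv.ofBijective rows (Finite.injective_iff_bijective.1 hinj)
    have hsub : d.submatrix rows cols = (d.submatrix id cols).submatrix σ id := rfl
    rw [hsub, det_permute]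
    exact I.mul_mem_left _ (h cols)
  · obtain ⟨i, j, hij, hne⟩ := Function.not_injective_iff.mp hinj
    rw [det_zero_of_row_eq hne (by ext; simp [hij])]
    exact I.zero_mem

theorem minorsIdeal_le_span_singleton {m k : ℕ} (d : Matrix (Fin m) (Fin k) R)
    (e : ⋀[R]^m (Fin m → R) ≃ₗ[R] R) {a : ExteriorAlgebra R (Fin m → R)}
    (ha : a ∈ ⋀[R]^m (Fin m → R))
    (h : ∀ x ∈ ⋀[R]^m (Fin k → R), ∃ c : R, ExteriorAlgebra.map d.mulVecLin x = c • a) :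
    minorsIdeal m d ≤ Ideal.span {e ⟨a, ha⟩} := by
  refine minorsIdeal_le_of_det_submatrix_mem d fun cols => ?_
  obtain ⟨c, hc⟩ := h _ (ιMulti_range R m ⟨fun i => Pi.single (cols i) 1, rfl⟩)
  rw [map_mulVecLin_ιMulti_single] at hc
  obtain ⟨u, hu⟩ := isUnit_apply_ιMulti_basis (Pi.basisFun R (Fin m)) e
  have hrel := congrArg e (Subtype.ext hc : (d.submatrix id cols).det •
    (⟨_, ιMulti_range R m ⟨_, rfl⟩⟩ : ⋀[R]^m (Fin m → R)) = c • ⟨a, ha⟩)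
  rw [map_smul, map_smul, smul_eq_mul, smul_eq_mul, ← hu] at hrel
  refine Ideal.mem_span_singleton'.mpr ⟨↑u⁻¹ * c, ?_⟩
  rw [mul_assoc, ← hrel, mul_left_comm, Units.inv_mul, mul_one]

end Matrix

section Grade

variable {R : Type*} [CommRing R]

theorem isUnit_of_isSMulRegular_quotSMulTop_of_mem_span_singleton {r s u : R}
    (hr : IsSMulRegular R r) (hs : IsSMulRegular (QuotSMulTop r R) s)
    (hru : r ∈ Ideal.span {u}) (hsu : s ∈ Ideal.span {u}) : IsUnit u := by
  obtain ⟨r', rfl⟩ := Ideal.mem_span_singleton'.mp hru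
  obtain ⟨s', rfl⟩ := Ideal.mem_span_singleton'.mp hsu
  have hr'_zero : (Submodule.Quotient.mk r' : QuotSMulTop (r' * u) R) = 0 := by
    refine hs (?_ : (s' * u) • Submodule.Quotient.mk r' = (s' * u) • 0)
    rw [smul_zero, ← Submodule.Quotient.mk_smul, Submodule.Quotient.mk_eq_zero]
    refine ⟨s', trivial, ?_⟩
    simp only [DistribSMul.toLinearMap_apply, smul_eq_mul]
    ring
  obtain ⟨t, -, ht⟩ := (Submodule.Quotient.mk_eq_zero _).mp hr'_zero
  refine IsUnit.of_mul_eq_one_right t (hr ?_)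
  simp only [DistribSMul.toLinearMap_apply, smul_eq_mul] at ht ⊢
  linear_combination u * ht

theorem exists_isSMulRegular_pair_of_two_le_regSeqSup {I : Ideal R} (h : 2 ≤ regSeqSup I) :
    ∃ r ∈ I, ∃ s ∈ I, IsSMulRegular R r ∧ IsSMulRegular (QuotSMulTop r R) s := by
  obtain ⟨rs, hmem, hreg, hlen⟩ : ∃ rs : List R, (∀ r ∈ rs, r ∈ I) ∧
      RingTheory.Sequence.IsRegular R rs ∧ 2 ≤ rs.length := by
    by_contra! hlt
    refine absurd (h.trans (sSup_le ?_)) (by decide : ¬ (2 : ℕ∞) ≤ 1)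
    rintro N ⟨rs, hmem, hreg, rfl⟩
    exact_mod_cast Nat.lt_succ_iff.mp (hlt rs hmem hreg)
  rcases rs with _ | ⟨r, _ | ⟨s, rest⟩⟩
  · simp at hlen
  · simp at hlen
  obtain ⟨hr, hrest⟩ :=
    (RingTheory.Sequence.isWeaklyRegular_cons_iff R _ _).mp hreg.toIsWeaklyRegular
  obtain ⟨hs, -⟩ := (RingTheory.Sequence.isWeaklyRegular_cons_iff _ _ _).mp hrest
  exact ⟨r, hmem r (by simp), s, hmem s (by simp), hr, hs⟩

theorem isUnit_of_le_span_singleton_of_two_le_idealGrade {u : R} {I : Ideal R}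
    (hI : I ≤ Ideal.span {u}) (h2 : 2 ≤ idealGrade I) : IsUnit u := by
  by_cases hu : Ideal.span {u} = ⊤
  · exact Ideal.span_singleton_eq_top.mp hu
  have hI_ne_top : I ≠ ⊤ := fun h => hu (top_le_iff.mp (h ▸ hI))
  rw [idealGrade, if_neg hI_ne_top] at h2
  obtain ⟨r, hr, s, hs, hr_reg, hs_reg⟩ := exists_isSMulRegular_pair_of_two_le_regSeqSup h2
  exact isUnit_of_isSMulRegular_quotSMulTop_of_mem_span_singleton hr_reg hs_reg (hI hr) (hI hs)

end Grade

theorem first_multiplier_isUnit_of_grade_two_general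
    (R : Type*) [CommRing R]
    (n : ℕ) (hn : 1 ≤ n) (f : ℕ → ℕ)
    (C : MatrixComplex R f)
    -- fixed identifications φ_i : Λ^{f_i} F_i ≅ R
    (φ : ∀ i : ℕ, (⋀[R]^(f i) (Fin (f i) → R)) ≃ₗ[R] R)
    -- the Buchsbaum–Eisenbud multipliers a₁, …, aₙ (with a_{n+1} = 1):
    (a : (i : ℕ) → ExteriorAlgebra R (Fin (f (i - 1)) → R))
    (ha_mem : ∀ j : ℕ, j + 1 ≤ n →
      a (j + 1) ∈ ⋀[R]^(matrixRank (C.d j)) (Fin (f j) → R))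
    (ha_eq : ∀ j : ℕ, j + 1 ≤ n →
      ∀ x ∈ ⋀[R]^(matrixRank (C.d j)) (Fin (f (j + 1)) → R),
        ∃ hy : x * a (j + 2) ∈ ⋀[R]^(f (j + 1)) (Fin (f (j + 1)) → R),
          ExteriorAlgebra.map (C.d j).mulVecLin x =
            (φ (j + 1)) ⟨x * a (j + 2), hy⟩ • a (j + 1))
    -- grade I(d₁) ≥ 2 and rank d₁ = rank F₀:
    (hgrade : (2 : ℕ∞) ≤ idealGrade (minorsIdeal (matrixRank (C.d 0)) (C.d 0)))
    (hrank : matrixRank (C.d 0) = f 0) :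
    ∃ hy : a 1 ∈ ⋀[R]^(f 0) (Fin (f 0) → R), IsUnit ((φ 0) ⟨a 1, hy⟩) := by
  have ha₁ : a 1 ∈ ⋀[R]^(f 0) (Fin (f 0) → R) := by simpa only [hrank] using ha_mem 0 hn
  have hmap : ∀ x ∈ ⋀[R]^(f 0) (Fin (f 1) → R),
      ∃ c : R, ExteriorAlgebra.map (C.d 0).mulVecLin x = c • a 1 := fun x hx =>
    ⟨_, (ha_eq 0 hn x (by rwa [hrank])).choose_spec⟩
  have hI : minorsIdeal (f 0) (C.d 0) ≤ Ideal.span {φ 0 ⟨a 1, ha₁⟩} :=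
    (C.d 0).minorsIdeal_le_span_singleton (φ 0) ha₁ hmap
  rw [hrank] at hgrade
  exact ⟨ha₁, isUnit_of_le_span_singleton_of_two_le_idealGrade hI hgrade⟩

theorem first_multiplier_isUnit_of_grade_two
    (R : Type*) [CommRing R] [IsNoetherianRing R]
    (n : ℕ) (hn : 1 ≤ n) (f : ℕ → ℕ) (hf : ∀ k, n < k → f k = 0)
    (C : MatrixComplex R f)
    (hacyclic : C.IsAcyclicInGrade n 1)
    -- fixed identifications φ_i : Λ^{f_i} F_i ≅ R
    (φ : ∀ i : ℕ, (⋀[R]^(f i) (Fin (f i) → R)) ≃ₗ[R] R)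
    -- the Buchsbaum–Eisenbud multipliers a₁, …, aₙ (with a_{n+1} = 1):
    (a : (i : ℕ) → ExteriorAlgebra R (Fin (f (i - 1)) → R))
    (ha_top : a (n + 1) = 1)
    (ha_mem : ∀ j : ℕ, j + 1 ≤ n →
      a (j + 1) ∈ ⋀[R]^(matrixRank (C.d j)) (Fin (f j) → R))
    (ha_eq : ∀ j : ℕ, j + 1 ≤ n →
      ∀ x ∈ ⋀[R]^(matrixRank (C.d j)) (Fin (f (j + 1)) → R),
        ∃ hy : x * a (j + 2) ∈ ⋀[R]^(f (j + 1)) (Fin (f (j + 1)) → R),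
          ExteriorAlgebra.map (C.d j).mulVecLin x =
            (φ (j + 1)) ⟨x * a (j + 2), hy⟩ • a (j + 1))
    -- grade I(d₁) ≥ 2 and rank d₁ = rank F₀:
    (hgrade : (2 : ℕ∞) ≤ idealGrade (minorsIdeal (matrixRank (C.d 0)) (C.d 0)))
    (hrank : matrixRank (C.d 0) = f 0) :
    ∃ hy : a 1 ∈ ⋀[R]^(f 0) (Fin (f 0) → R), IsUnit ((φ 0) ⟨a 1, hy⟩) :=
  first_multiplier_isUnit_of_grade_two_general R n hn f C φ a ha_mem ha_eq hgrade hrank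
end

section
/- (Northcott.) Let R be a commutative Noetherian ring and I ⊊ R a proper ideal. Then for every integer n ≥ 0, the maximal length of an R[x_1, …, x_n]-regular sequence contained in the extended ideal I·R[x_1, …, x_n] equals grade I; consequently the true grade of I, defined as sup over n ≥ 0 of these maximal lengths, equals grade I. -/
open RingTheory.Sequence Submodule Pointwise

section

variable {R : Type*} [CommRing R]

section

variable {M : Type*} [AddCommGroup M] [Module R M]

theorem Ideal.exists_ne_zero_forall_smul_eq_zero [IsNoetherianRing R] [Module.Finite R M]
    {I : Ideal R} (h : ∀ c ∈ I, ¬ IsSMulRegular M c) :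
    ∃ u : M, u ≠ 0 ∧ ∀ c ∈ I, c • u = 0 := by
  obtain ⟨P, hP, hIP⟩ := (Ideal.subset_union_prime_finite (associatedPrimes.finite R M)
    (f := id) 0 0 fun p hp _ _ => hp.isPrime).mp <|
      show (I : Set R) ⊆ ⋃ p ∈ associatedPrimes R M, (p : Set R) by
        rw [biUnion_associatedPrimes_eq_compl_regular]; exact fun c hc => h c hc
  obtain ⟨hPrime, u, rfl⟩ := isAssociatedPrime_iff.mp hP
  exact ⟨u, fun hu => hPrime.ne_top (by simp [hu]), fun c hc => by simpa using hIP hc⟩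

theorem Ideal.exists_mem_forall_isSMulRegular [IsNoetherianRing R] {ι : Type*} [Finite ι]
    (N : ι → Type*) [∀ i, AddCommGroup (N i)] [∀ i, Module R (N i)]
    [∀ i, Module.Finite R (N i)]
    {I : Ideal R} (h : ∀ i, ∃ c ∈ I, IsSMulRegular (N i) c) :
    ∃ c ∈ I, ∀ i, IsSMulRegular (N i) c := by
  by_contra! hI
  obtain ⟨u, hu, hIu⟩ := Ideal.exists_ne_zero_forall_smul_eq_zero (M := ∀ i, N i) (I := I)
    fun c hc hreg => by
      obtain ⟨i, hi⟩ := hI c hc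
      exact hi (Pi.isSMulRegular_iff.mp hreg i)
  obtain ⟨i, hi⟩ := Function.ne_iff.mp hu
  obtain ⟨c, hc, hreg⟩ := h i
  exact hi (hreg.right_eq_zero_of_smul (congrFun (hIu c hc) i))

theorem Submodule.mem_smul_top_iff_exists {r : R} {x : M} :
    x ∈ (r • ⊤ : Submodule R M) ↔ ∃ y, r • y = x := by
  simp [mem_smul_pointwise_iff_exists]

theorem IsSMulRegular.quotSMulTop_swap {a b : R} (ha : IsSMulRegular M a)
    (hb : IsSMulRegular (QuotSMulTop a M) b) : IsSMulRegular (QuotSMulTop b M) a := by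
  rw [isSMulRegular_quotient_iff_mem_of_smul_mem] at hb ⊢
  intro x hx
  obtain ⟨y, hy⟩ := mem_smul_top_iff_exists.mp hx
  obtain ⟨z, rfl⟩ :=
    mem_smul_top_iff_exists.mp (hb y (mem_smul_top_iff_exists.mpr ⟨x, hy.symm⟩))
  have hx : x = b • z := ha (show a • x = a • b • z by rw [← hy, smul_comm])
  exact mem_smul_top_iff_exists.mpr ⟨z, hx.symm⟩

/-- Kaplansky's exchange: if `u ∉ aM` and `I u ⊆ aM`, then `v` with `a v = b u` satisfies
`v ∉ bM` and `I v ⊆ bM`. -/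
theorem forall_not_isSMulRegular_quotSMulTop_exchange [IsNoetherianRing R] [Module.Finite R M]
    {I : Ideal R} {a b : R} (ha : IsSMulRegular M a) (hb : IsSMulRegular M b) (hbI : b ∈ I)
    (h : ∀ c ∈ I, ¬ IsSMulRegular (QuotSMulTop a M) c) :
    ∀ c ∈ I, ¬ IsSMulRegular (QuotSMulTop b M) c := by
  obtain ⟨u, hu, hIu⟩ := Ideal.exists_ne_zero_forall_smul_eq_zero h
  obtain ⟨u, rfl⟩ := Submodule.Quotient.mk_surjective _ u
  simp only [ne_eq, ← Submodule.Quotient.mk_smul, Submodule.Quotient.mk_eq_zero,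
    mem_smul_top_iff_exists] at hu hIu
  obtain ⟨v, hv⟩ := hIu b hbI
  have hv0 : (Submodule.Quotient.mk v : QuotSMulTop b M) ≠ 0 := by
    rw [ne_eq, Submodule.Quotient.mk_eq_zero, mem_smul_top_iff_exists]
    rintro ⟨w, rfl⟩
    exact hu ⟨w, hb (show b • a • w = b • u by rw [← hv, smul_comm])⟩
  intro c hc hreg
  obtain ⟨u', hu'⟩ := hIu c hc
  refine hv0 (hreg.right_eq_zero_of_smul ?_)
  rw [← Submodule.Quotient.mk_smul, Submodule.Quotient.mk_eq_zero, mem_smul_top_iff_exists]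
  refine ⟨u', ha (show a • b • u' = a • c • v by
    rw [smul_comm a b, hu', smul_comm b c, ← hv, smul_comm c a])⟩

theorem Ideal.ofList_append_singleton (rs : List R) (a : R) :
    Ideal.ofList (rs ++ [a]) = Ideal.ofList (a :: rs) := by
  rw [Ideal.ofList_append, Ideal.ofList_singleton, Ideal.ofList_cons, sup_comm]

theorem isSMulRegular_quotient_ofList_nil_iff {c : R} :
    IsSMulRegular (M ⧸ (Ideal.ofList ([] : List R) • ⊤ : Submodule R M)) c ↔
      IsSMulRegular M c :=
  (quotEquivOfEqBot _ (by simp)).isSMulRegular_congr c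

namespace RingTheory.Sequence

theorem IsWeaklyRegular.swap {a b : R} {rs : List R} (h : IsWeaklyRegular M (a :: b :: rs))
    (hb : IsSMulRegular M b) : IsWeaklyRegular M (b :: a :: rs) := by
  rw [show ∀ x y : R, x :: y :: rs = [x, y] ++ rs from fun _ _ => rfl,
    isWeaklyRegular_append_iff] at h ⊢
  have hperm : Ideal.ofList [b, a] = Ideal.ofList [a, b] := by
    simp only [Ideal.ofList_cons, Ideal.ofList_nil, sup_bot_eq]
    exact sup_comm _ _
  obtain ⟨hab, hrs⟩ := h
  rw [isWeaklyRegular_cons_iff, isWeaklyRegular_singleton_iff] at hab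
  refine ⟨(isWeaklyRegular_cons_iff M b [a]).mpr
    ⟨hb, (isWeaklyRegular_singleton_iff _ a).mpr (hab.1.quotSMulTop_swap hab.2)⟩, ?_⟩
  rwa [hperm]

theorem IsWeaklyRegular.cons_of_forall_isPrefix {c : R} {rs : List R}
    (h : IsWeaklyRegular M rs)
    (hc : ∀ p, p <+: rs → IsSMulRegular (M ⧸ (Ideal.ofList p • ⊤ : Submodule R M)) c) :
    IsWeaklyRegular M (c :: rs) := by
  induction rs generalizing M with
  | nil =>
    exact (isWeaklyRegular_singleton_iff M c).mpr
      (isSMulRegular_quotient_ofList_nil_iff.mp (hc [] List.nil_prefix))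
  | cons a rs ih =>
    rw [isWeaklyRegular_cons_iff] at h
    have hc' (p : List R) (hp : p <+: rs) :
        IsSMulRegular (QuotSMulTop a M ⧸ (Ideal.ofList p • ⊤ : Submodule R _)) c :=
      ((quotOfListConsSMulTopEquivQuotSMulTopInner M a p).isSMulRegular_congr c).mp
        (hc (a :: p) (List.cons_prefix_cons.mpr ⟨rfl, hp⟩))
    exact (IsWeaklyRegular.cons h.1 (ih h.2 hc')).swap
      (isSMulRegular_quotient_ofList_nil_iff.mp (hc [] List.nil_prefix))

theorem IsWeaklyRegular.exists_isSMulRegular_of_isPrefix {a : R} {rs p : List R}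
    (h : IsWeaklyRegular M (rs ++ [a])) (hp : p <+: rs) :
    ∃ x ∈ rs ++ [a], IsSMulRegular (M ⧸ (Ideal.ofList p • ⊤ : Submodule R M)) x := by
  obtain ⟨t, rfl⟩ := hp
  rw [List.append_assoc, isWeaklyRegular_append_iff] at h
  obtain ⟨x, q, hxq⟩ := List.exists_cons_of_ne_nil (List.append_ne_nil_of_right_ne_nil t
    (List.cons_ne_nil a []))
  rw [hxq, isWeaklyRegular_cons_iff] at h
  exact ⟨x, by simp [List.append_assoc, hxq], h.2.1⟩

theorem exists_mem_forall_isPrefix_isSMulRegular [IsNoetherianRing R] [Module.Finite R M]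
    {I : Ideal R} {as bs : List R} {a b : R} (hasI : ∀ r ∈ as ++ [a], r ∈ I)
    (hbsI : ∀ r ∈ bs ++ [b], r ∈ I) (has : IsWeaklyRegular M (as ++ [a]))
    (hbs : IsWeaklyRegular M (bs ++ [b])) :
    ∃ c ∈ I, ∀ p, p <+: as ∨ p <+: bs →
      IsSMulRegular (M ⧸ (Ideal.ofList p • ⊤ : Submodule R M)) c := by
  classical
  obtain ⟨c, hcI, hc⟩ := Ideal.exists_mem_forall_isSMulRegular (I := I)
    (fun p : {p // p ∈ as.inits ++ bs.inits} => M ⧸ (Ideal.ofList p.1 • ⊤ : Submodule R M))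
    fun ⟨p, hp⟩ => by
      simp only [List.mem_append, List.mem_inits] at hp
      rcases hp with hp | hp
      · obtain ⟨x, hx, hreg⟩ := has.exists_isSMulRegular_of_isPrefix hp
        exact ⟨x, hasI x hx, hreg⟩
      · obtain ⟨x, hx, hreg⟩ := hbs.exists_isSMulRegular_of_isPrefix hp
        exact ⟨x, hbsI x hx, hreg⟩
  exact ⟨c, hcI, fun p hp =>
    hc ⟨p, by simpa only [List.mem_append, List.mem_inits] using hp⟩⟩

theorem IsWeaklyRegular.length_le_of_forall_not_isSMulRegular [IsNoetherianRing R]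
    [Module.Finite R M] {I : Ideal R} {as bs : List R} (hasI : ∀ r ∈ as, r ∈ I)
    (hbsI : ∀ r ∈ bs, r ∈ I) (has : IsWeaklyRegular M as) (hbs : IsWeaklyRegular M bs)
    (hmax : ∀ c ∈ I, ¬ IsSMulRegular (M ⧸ (Ideal.ofList as • ⊤ : Submodule R M)) c) :
    bs.length ≤ as.length := by
  induction as using List.reverseRecOn generalizing M bs with
  | nil =>
    obtain _ | ⟨b, bs⟩ := bs
    · rfl
    · exact absurd (isSMulRegular_quotient_ofList_nil_iff.mpr
        ((isWeaklyRegular_cons_iff M b bs).mp hbs).1) (hmax b (hbsI b List.mem_cons_self))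
  | append_singleton as a ih =>
    obtain rfl | ⟨bs, b, rfl⟩ := bs.eq_nil_or_concat'
    · simp
    obtain ⟨c, hcI, hc⟩ := exists_mem_forall_isPrefix_isSMulRegular hasI hbsI has hbs
    obtain ⟨has', ha⟩ := (isWeaklyRegular_append_iff M as [a]).mp has
    rw [isWeaklyRegular_singleton_iff] at ha
    have hcas := has'.cons_of_forall_isPrefix fun p hp => hc p (.inl hp)
    have hcbs := ((isWeaklyRegular_append_iff M bs [b]).mp hbs).1.cons_of_forall_isPrefix
      fun p hp => hc p (.inr hp)
    rw [isWeaklyRegular_cons_iff] at hcas hcbs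
    -- by the exchange lemma `as ++ [c]` is again maximal, i.e. `as` is maximal modulo `c`
    have hmax' : ∀ x ∈ I, ¬ IsSMulRegular
        (QuotSMulTop c M ⧸ (Ideal.ofList as • ⊤ : Submodule R (QuotSMulTop c M))) x := by
      intro x hx
      rw [← (quotOfListConsSMulTopEquivQuotSMulTopInner M c as).isSMulRegular_congr,
        (quotOfListConsSMulTopEquivQuotSMulTopOuter M c as).isSMulRegular_congr]
      refine forall_not_isSMulRegular_quotSMulTop_exchange ha (hc as (.inl (List.prefix_refl as)))
        hcI (fun y hy => ?_) x hx
      rw [← (quotOfListConsSMulTopEquivQuotSMulTopOuter M a as).isSMulRegular_congr,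
        ← Ideal.ofList_append_singleton]
      exact hmax y hy
    simpa using ih (fun r hr => hasI r (List.mem_append_left _ hr))
      (fun r hr => hbsI r (List.mem_append_left _ hr)) hcas.2 hcbs.2 hmax'

theorem exists_isWeaklyRegular_forall_not_isSMulRegular [IsNoetherian R M] (I : Ideal R)
    (hI : I • (⊤ : Submodule R M) ≠ ⊤) :
    ∃ as : List R, (∀ r ∈ as, r ∈ I) ∧ IsWeaklyRegular M as ∧
      ∀ c ∈ I, ¬ IsSMulRegular (M ⧸ (Ideal.ofList as • ⊤ : Submodule R M)) c := by
  obtain ⟨_, ⟨as, hasI, has, rfl⟩, hmax⟩ := set_has_maximal_iff_noetherian.mpr inferInstance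
    {N | ∃ as : List R, (∀ r ∈ as, r ∈ I) ∧ IsWeaklyRegular M as ∧
      N = (Ideal.ofList as • ⊤ : Submodule R M)}
    ⟨_, [], by simp, IsWeaklyRegular.nil R M, rfl⟩
  refine ⟨as, hasI, has, fun c hcI hc => hI (top_le_iff.mp ?_)⟩
  have hle : c • (⊤ : Submodule R M) ≤ Ideal.ofList as • ⊤ := by
    by_contra hnle
    refine hmax _ ⟨as ++ [c], ?_, (isWeaklyRegular_append_iff M as [c]).mpr
      ⟨has, (isWeaklyRegular_singleton_iff _ c).mpr hc⟩, rfl⟩ ?_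
    · simpa [or_imp, forall_and] using ⟨hasI, hcI⟩
    · rw [Ideal.ofList_append_singleton, Ideal.ofList_cons_smul]
      exact right_lt_sup.mpr hnle
  calc ⊤ ≤ (Ideal.ofList as • ⊤ : Submodule R M) := fun x _ => by
        rw [← Submodule.Quotient.mk_eq_zero]
        refine hc.right_eq_zero_of_smul ?_
        rw [← Submodule.Quotient.mk_smul, Submodule.Quotient.mk_eq_zero]
        exact hle (smul_mem_pointwise_smul x c ⊤ trivial)
    _ ≤ I • ⊤ := smul_mono_left (Ideal.span_le.mpr hasI)

end RingTheory.Sequence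

end

theorem Ideal.smul_top_eq_self (J : Ideal R) : (J • ⊤ : Submodule R R) = J := by
  rw [Ideal.smul_eq_mul, Ideal.mul_top]

open MvPolynomial in
theorem MvPolynomial.forall_not_isSMulRegular_quotient_map_C [IsNoetherianRing R] {σ : Type*}
    {I J : Ideal R} (h : ∀ c ∈ I, ¬ IsSMulRegular (R ⧸ J) c) :
    ∀ f ∈ I.map (C : R →+* MvPolynomial σ R),
      ¬ IsSMulRegular (MvPolynomial σ R ⧸ J.map (C : R →+* MvPolynomial σ R)) f := by
  obtain ⟨u, hu, hIu⟩ := Ideal.exists_ne_zero_forall_smul_eq_zero h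
  obtain ⟨u, rfl⟩ := Submodule.Quotient.mk_surjective _ u
  simp only [ne_eq, ← Submodule.Quotient.mk_smul, Submodule.Quotient.mk_eq_zero,
    smul_eq_mul] at hu hIu
  intro f hf hreg
  have hCu : (Submodule.Quotient.mk (C u) : MvPolynomial σ R ⧸ J.map C) = 0 := by
    refine hreg.right_eq_zero_of_smul ?_
    rw [← Submodule.Quotient.mk_smul, Submodule.Quotient.mk_eq_zero, smul_eq_mul,
      mem_map_C_iff]
    intro m
    rw [mul_comm, coeff_C_mul, mul_comm]
    exact hIu _ (mem_map_C_iff.mp hf m)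
  rw [Submodule.Quotient.mk_eq_zero, mem_map_C_iff] at hCu
  exact hu (by simpa using hCu 0)

theorem regSeqSup_eq_length [IsNoetherianRing R] {I : Ideal R} {as : List R}
    (hasI : ∀ r ∈ as, r ∈ I) (has : IsWeaklyRegular R as)
    (hmax : ∀ c ∈ I, ¬ IsSMulRegular (R ⧸ Ideal.ofList as) c) :
    regSeqSup I = as.length := by
  rw [← Ideal.smul_top_eq_self (Ideal.ofList as)] at hmax
  refine le_antisymm (sSup_le ?_) (le_sSup ⟨as, hasI, ⟨has, fun htop => ?_⟩, rfl⟩)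
  · rintro _ ⟨bs, hbsI, hbs, rfl⟩
    exact_mod_cast has.length_le_of_forall_not_isSMulRegular hasI hbsI hbs.1 hmax
  · rw [← htop] at hmax
    exact hmax 0 I.zero_mem (Function.injective_of_subsingleton _)

end

theorem polynomial_grade_eq_grade
    (R : Type*) [CommRing R] [IsNoetherianRing R] (I : Ideal R) (hI : I ≠ ⊤) :
    (∀ n : ℕ,
      regSeqSup (Ideal.map (MvPolynomial.C : R →+* MvPolynomial (Fin n) R) I) = idealGrade I) ∧
    (⨆ n : ℕ,
      regSeqSup (Ideal.map (MvPolynomial.C : R →+* MvPolynomial (Fin n) R) I)) = idealGrade I := by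
  obtain ⟨as, hasI, has, hmax⟩ :=
    exists_isWeaklyRegular_forall_not_isSMulRegular (M := R) I (by rwa [Ideal.smul_top_eq_self])
  rw [Ideal.smul_top_eq_self] at hmax
  have hgrade : idealGrade I = as.length := by
    rw [idealGrade, if_neg hI, regSeqSup_eq_length hasI has hmax]
  have key (n : ℕ) :
      regSeqSup (Ideal.map (MvPolynomial.C : R →+* MvPolynomial (Fin n) R) I) = idealGrade I := by
    rw [hgrade, ← as.length_map MvPolynomial.C]
    refine regSeqSup_eq_length (fun f hf => ?_) ?_ ?_
    · obtain ⟨r, hr, rfl⟩ := List.mem_map.mp hf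
      exact Ideal.mem_map_of_mem _ (hasI r hr)
    · simpa using has.of_flat (S := MvPolynomial (Fin n) R)
    · rw [← Ideal.map_ofList]
      exact MvPolynomial.forall_not_isSMulRegular_quotient_map_C hmax
  exact ⟨key, by simp only [key, iSup_const]⟩
end
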